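/- arXiv:2512.17960 — 2 statements merged into one kernel-verified Lean document; each statement's English description precedes it below -/
import Mathlib

section
/- Let D ⊆ {0,...,n−1} × {0,...,m−1} be a finite digit set, τ(i,j)=j, and t_j = #{i : (i,j) ∈ D}. Among all probability vectors p on D, the quantity H(τ_*p) + β·H(p | τ) (with β ∈ (0,1), where H(p|τ) = H(p) − H(τ_*p)) attains its maximum value log(Σ_j t_j^β), where the sum is over rows j with t_j ≥ 1. -/
/-! Write `q = τ_*p` and `t_j` for the row sizes. Since the uniform distribution maximises
entropy on each row, `H(p) ≤ H(q) + ∑ q_j log t_j`, so the objective is at most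
`∑ q_j (log t_j^β - log q_j)`, which by the log-sum inequality is at most `log ∑ t_j^β`, with
equality for the Gibbs weights `q_j = t_j^β / ∑ t_i^β`. Spreading these weights uniformly over
each row turns the first bound into an equality as well, so the maximum is attained. -/

open Finset Real

variable {α κ : Type*}

noncomputable def entropy (s : Finset α) (p : α → ℝ) : ℝ := -∑ a ∈ s, p a * log (p a)

def pushforward [DecidableEq κ] (s : Finset α) (f : α → κ) (p : α → ℝ) (j : κ) : ℝ :=
  ∑ a ∈ s with f a = j, p a

lemma mul_log_sub_le {a b c : ℝ} (ha : 0 ≤ a) (hb : 0 ≤ b) (hab : 0 < a → 0 < b) (hc : 0 < c) :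
    a * (log b - log a) ≤ a * log c + b / c - a := by
  rcases ha.eq_or_lt with rfl | ha
  · simpa using div_nonneg hb hc.le
  have hb := hab ha
  have key := log_le_sub_one_of_pos (show 0 < b / (a * c) by positivity)
  rw [log_div hb.ne' (by positivity), log_mul ha.ne' hc.ne'] at key
  have := mul_le_mul_of_nonneg_left key ha.le
  field_simp at this ⊢
  linarith

/-- The **log-sum inequality**. -/
theorem sum_mul_log_sub_le {ι : Type*} (s : Finset ι) {a b : ι → ℝ} (ha : ∀ i ∈ s, 0 ≤ a i)
    (hb : ∀ i ∈ s, 0 ≤ b i) (hab : ∀ i ∈ s, 0 < a i → 0 < b i) :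
    ∑ i ∈ s, a i * (log (b i) - log (a i)) ≤
      (∑ i ∈ s, a i) * (log (∑ i ∈ s, b i) - log (∑ i ∈ s, a i)) := by
  set A := ∑ i ∈ s, a i
  set B := ∑ i ∈ s, b i
  rcases (sum_nonneg ha).eq_or_lt with hA | hA
  · have hzero : ∀ i ∈ s, a i = 0 := (sum_eq_zero_iff_of_nonneg ha).mp hA.symm
    rw [sum_eq_zero fun i hi => by rw [hzero i hi, zero_mul], show A = 0 from hA.symm, zero_mul]
  obtain ⟨i, hi, hai⟩ := exists_lt_of_sum_lt (by simpa using hA : ∑ i ∈ s, (0 : ℝ) < A)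
  have hB : 0 < B := (hab i hi hai).trans_le (single_le_sum hb hi)
  calc ∑ i ∈ s, a i * (log (b i) - log (a i))
      ≤ ∑ i ∈ s, (a i * log (B / A) + b i / (B / A) - a i) :=
        sum_le_sum fun i hi => mul_log_sub_le (ha i hi) (hb i hi) (hab i hi) (by positivity)
    _ = A * (log B - log A) := by
        rw [sum_sub_distrib, sum_add_distrib, ← sum_mul, ← sum_div, log_div hB.ne' hA.ne']
        field_simp
        ring

lemma Real.log_rpow_of_nonneg {x : ℝ} (hx : 0 ≤ x) (y : ℝ) : log (x ^ y) = y * log x := by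
  rcases hx.eq_or_lt with rfl | hx
  · rcases eq_or_ne y 0 with rfl | hy <;> simp [*]
  · exact log_rpow hx y

section Fintype

variable [Fintype κ]

theorem sum_mul_log_sub_le_log_sum {q w : κ → ℝ} (hq : ∀ j, 0 ≤ q j) (hq1 : ∑ j, q j = 1)
    (hw : ∀ j, 0 ≤ w j) (hqw : ∀ j, 0 < q j → 0 < w j) :
    ∑ j, q j * (log (w j) - log (q j)) ≤ log (∑ j, w j) := by
  simpa [hq1] using sum_mul_log_sub_le univ (fun j _ => hq j) (fun j _ => hw j) (fun j _ => hqw j)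

theorem sum_div_mul_log_sub_log_div_eq {w : κ → ℝ} (hZ : 0 < ∑ j, w j) :
    ∑ j, w j / (∑ i, w i) * (log (w j) - log (w j / ∑ i, w i)) = log (∑ j, w j) := by
  set Z := ∑ i, w i
  have hterm : ∀ j, w j / Z * (log (w j) - log (w j / Z)) = w j / Z * log Z := by
    intro j
    rcases eq_or_ne (w j) 0 with h | h
    · simp [h]
    · rw [log_div h hZ.ne']
      ring
  rw [sum_congr rfl fun j _ => hterm j, ← sum_mul, ← sum_div, div_self hZ.ne', one_mul]

lemma entropy_add_mul_sum_mul_log_eq {t : κ → ℝ} (ht : ∀ j, 0 ≤ t j) (q : κ → ℝ)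
    (β : ℝ) :
    entropy univ q + β * ∑ j, q j * log (t j) = ∑ j, q j * (log (t j ^ β) - log (q j)) := by
  simp only [entropy, log_rpow_of_nonneg (ht _), mul_sum, mul_sub, sum_sub_distrib]
  ring_nf

end Fintype

section Fibers

variable [DecidableEq κ] {s : Finset α} {f : α → κ}

lemma pushforward_nonneg {p : α → ℝ} (hp : ∀ a, 0 ≤ p a) (j : κ) : 0 ≤ pushforward s f p j :=
  sum_nonneg fun a _ => hp a

lemma card_fiber_pos_of_pushforward_pos {p : α → ℝ} {j : κ} (h : 0 < pushforward s f p j) :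
    0 < #{a ∈ s | f a = j} :=
  card_pos.mpr (nonempty_of_sum_ne_zero h.ne')

lemma pushforward_eq_of_uniform_on_fibers {p : α → ℝ} {q : κ → ℝ}
    (hq : ∀ j, #{a ∈ s | f a = j} = 0 → q j = 0)
    (hp : ∀ a ∈ s, p a = q (f a) / #{a' ∈ s | f a' = f a}) :
    pushforward s f p = q := by
  funext j
  have hconst : ∀ a ∈ ({a ∈ s | f a = j} : Finset α), p a = q j / #{a' ∈ s | f a' = j} := by
    intro a ha
    rw [mem_filter] at ha
    rw [hp a ha.1, ha.2]
  rw [pushforward, sum_congr rfl hconst, sum_const, nsmul_eq_mul]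
  rcases eq_or_ne #{a ∈ s | f a = j} 0 with h | h
  · simp [h, hq j h]
  · field_simp

variable [Fintype κ]

lemma sum_pushforward (p : α → ℝ) : ∑ j, pushforward s f p j = ∑ a ∈ s, p a :=
  sum_fiberwise s f p

theorem entropy_le_entropy_pushforward_add {p : α → ℝ} (hp : ∀ a, 0 ≤ p a) :
    entropy s p ≤ entropy univ (pushforward s f p) +
      ∑ j, pushforward s f p j * log #{a ∈ s | f a = j} := by
  have hfiber : ∀ j, -∑ a ∈ s with f a = j, p a * log (p a) ≤
      pushforward s f p j * (log #{a ∈ s | f a = j} - log (pushforward s f p j)) := by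
    intro j
    simpa [pushforward] using
      sum_mul_log_sub_le {a ∈ s | f a = j} (b := fun _ => 1) (fun a _ => hp a)
        (fun _ _ => zero_le_one) (fun _ _ _ => one_pos)
  calc entropy s p = ∑ j, -∑ a ∈ s with f a = j, p a * log (p a) := by
        rw [entropy, ← sum_fiberwise s f, sum_neg_distrib]
    _ ≤ ∑ j, pushforward s f p j * (log #{a ∈ s | f a = j} - log (pushforward s f p j)) :=
        sum_le_sum fun j _ => hfiber j
    _ = _ := by
        simp only [entropy, mul_sub, sum_sub_distrib]
        ring

lemma entropy_eq_of_uniform_on_fibers {p : α → ℝ} {q : κ → ℝ}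
    (hq : ∀ j, #{a ∈ s | f a = j} = 0 → q j = 0)
    (hp : ∀ a ∈ s, p a = q (f a) / #{a' ∈ s | f a' = f a}) :
    entropy s p = entropy univ q + ∑ j, q j * log #{a ∈ s | f a = j} := by
  have hfiber : ∀ j, ∑ a ∈ s with f a = j, p a * log (p a) =
      q j * log (q j) - q j * log #{a ∈ s | f a = j} := by
    intro j
    have hconst : ∀ a ∈ ({a ∈ s | f a = j} : Finset α), p a * log (p a) =
        q j / #{a' ∈ s | f a' = j} * log (q j / #{a' ∈ s | f a' = j}) := by
      intro a ha
      rw [mem_filter] at ha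
      rw [hp a ha.1, ha.2]
    rw [sum_congr rfl hconst, sum_const, nsmul_eq_mul]
    rcases eq_or_ne #{a ∈ s | f a = j} 0 with h | h
    · simp [h, hq j h]
    rcases eq_or_ne (q j) 0 with hqj | hqj
    · simp [hqj]
    rw [log_div hqj (by exact_mod_cast h)]
    field_simp
  rw [entropy, ← sum_fiberwise s f]
  simp only [hfiber, entropy, sum_sub_distrib]
  ring

end Fibers

section Objective

variable [Fintype κ] [DecidableEq κ] {s : Finset α} {f : α → κ} {β : ℝ}

theorem entropy_pushforward_add_mul_le (hβ : 0 ≤ β) {p : α → ℝ} (hp : ∀ a, 0 ≤ p a)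
    (hp1 : ∑ a ∈ s, p a = 1) :
    entropy univ (pushforward s f p) + β * (entropy s p - entropy univ (pushforward s f p)) ≤
      log (∑ j, (#{a ∈ s | f a = j} : ℝ) ^ β) := by
  set q := pushforward s f p
  have hchain := entropy_le_entropy_pushforward_add (s := s) (f := f) hp
  calc _ ≤ entropy univ q + β * ∑ j, q j * log #{a ∈ s | f a = j} := by
        gcongr
        linarith
    _ = ∑ j, q j * (log ((#{a ∈ s | f a = j} : ℝ) ^ β) - log (q j)) :=
        entropy_add_mul_sum_mul_log_eq (fun _ => Nat.cast_nonneg _) q β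
    _ ≤ _ := sum_mul_log_sub_le_log_sum (pushforward_nonneg hp) (by rw [sum_pushforward, hp1])
        (fun _ => by positivity)
        (fun _ h => rpow_pos_of_pos (Nat.cast_pos.mpr (card_fiber_pos_of_pushforward_pos h)) β)

theorem exists_entropy_pushforward_add_mul_eq (hβ : β ≠ 0) (hs : s.Nonempty) :
    ∃ p : α → ℝ, (∀ a, 0 ≤ p a) ∧ (∀ a ∉ s, p a = 0) ∧ ∑ a ∈ s, p a = 1 ∧
      entropy univ (pushforward s f p) + β * (entropy s p - entropy univ (pushforward s f p)) =
        log (∑ j, (#{a ∈ s | f a = j} : ℝ) ^ β) := by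
  classical
  let t : κ → ℝ := fun j => #{a ∈ s | f a = j}
  let Z := ∑ j, t j ^ β
  have hZ : 0 < Z := by
    obtain ⟨a, ha⟩ := hs
    have hta : 0 < t (f a) := Nat.cast_pos.mpr (card_pos.mpr ⟨a, mem_filter.mpr ⟨ha, rfl⟩⟩)
    exact (rpow_pos_of_pos hta β).trans_le
      (single_le_sum (f := fun j => t j ^ β) (fun j _ => by positivity) (mem_univ (f a)))
  let q : κ → ℝ := fun j => t j ^ β / Z
  have hq : ∀ j, #{a ∈ s | f a = j} = 0 → q j = 0 := by
    intro j h
    simp [q, t, h, zero_rpow hβ]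
  let p : α → ℝ := fun a => if a ∈ s then q (f a) / t (f a) else 0
  have hp : ∀ a ∈ s, p a = q (f a) / #{a' ∈ s | f a' = f a} := fun a ha => if_pos ha
  have hpush := pushforward_eq_of_uniform_on_fibers hq hp
  have hp0 : ∀ a, 0 ≤ p a := by
    intro a
    dsimp only [p]
    split_ifs
    · exact div_nonneg (div_nonneg (rpow_nonneg (Nat.cast_nonneg _) _) hZ.le) (Nat.cast_nonneg _)
    · exact le_rfl
  refine ⟨p, hp0, fun a ha => if_neg ha, ?_, ?_⟩
  · rw [← sum_pushforward (f := f), hpush, ← sum_div, div_self hZ.ne']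
  · rw [entropy_eq_of_uniform_on_fibers hq hp, hpush, add_sub_cancel_left,
      entropy_add_mul_sum_mul_log_eq (fun _ => Nat.cast_nonneg _) q β]
    exact sum_div_mul_log_sub_log_div_eq hZ

end Objective

/-- Over all probability vectors `p` on the digit set `D`, the quantity
`H(τ_*p) + β·(H(p) − H(τ_*p))` (with `τ(i,j) = j` and `β ∈ (0,1)`) attains the maximum
value `log (∑_{j : t_j ≥ 1} t_j ^ β)`, where `t_j = #{i : (i,j) ∈ D}`. -/
theorem stmt5 (n m : ℕ) (D : Finset (Fin n × Fin m)) (hD : D.Nonempty)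
    (β : ℝ) (hβ : β ∈ Set.Ioo (0 : ℝ) 1)
    (t : Fin m → ℕ) (ht : ∀ j, t j = (D.filter (fun d => d.2 = j)).card) :
    IsGreatest
      { x : ℝ | ∃ p : Fin n × Fin m → ℝ,
          (∀ d, 0 ≤ p d) ∧ (∀ d, d ∉ D → p d = 0) ∧ (∑ d ∈ D, p d = 1) ∧
          x = (-∑ j, (∑ d ∈ D.filter (fun d => d.2 = j), p d)
                  * Real.log (∑ d ∈ D.filter (fun d => d.2 = j), p d))
              + β * ((-∑ d ∈ D, p d * Real.log (p d))
                  - (-∑ j, (∑ d ∈ D.filter (fun d => d.2 = j), p d)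
                      * Real.log (∑ d ∈ D.filter (fun d => d.2 = j), p d))) }
      (Real.log (∑ j ∈ univ.filter (fun j => 1 ≤ t j), (t j : ℝ) ^ β)) := by
  obtain rfl : t = fun j => #{d ∈ D | d.2 = j} := funext ht
  have hβ0 : β ≠ 0 := hβ.1.ne'
  have hrows : ∑ j ∈ univ.filter (fun j => 1 ≤ #{d ∈ D | d.2 = j}),
      (#{d ∈ D | d.2 = j} : ℝ) ^ β = ∑ j, (#{d ∈ D | d.2 = j} : ℝ) ^ β :=
    sum_filter_of_ne fun j _ h => Nat.one_le_iff_ne_zero.mpr fun h0 => h (by simp [h0, hβ0])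
  rw [hrows]
  constructor
  · obtain ⟨p, hp0, hps, hp1, hval⟩ := exists_entropy_pushforward_add_mul_eq (f := Prod.snd) hβ0 hD
    exact ⟨p, hp0, hps, hp1, hval.symm⟩
  · rintro x ⟨p, hp0, -, hp1, rfl⟩
    exact entropy_pushforward_add_mul_le hβ.1.le hp0 hp1
end

section
/- For any probability vector p on D, writing d(p) = H(τ_*p)/log m + (H(p) − H(τ_*p))/log n with 1 < m < n, we have d(p) ≤ log(Σ_j t_j^{log m/log n})/log m, with equality for p_{i,j} = t_j^{β−1}/Σ_k t_k^β where β = log m/log n. -/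
/-! Write `q = τ_* p` and `β = log m / log n`. Then `log m · d(p) = H(q) + β (H(p) - H(q))`, and
`H(p) - H(q) = ∑ q_j H(p | row j) ≤ ∑ q_j log t_j`, so `log m · d(p) ≤ ∑ q_j log (t_j ^ β / q_j)`,
which the log-sum inequality bounds by `log ∑ t_j ^ β`. Both steps are equalities when `p` is
uniform on each row and `q_j` is proportional to `t_j ^ β`, as for the stated `p`. -/

open Finset Real

section LogSum

variable {ι : Type*}

theorem mul_log_sub_mul_log_le {w a c : ℝ} (hw : 0 ≤ w) (ha : 0 ≤ a) (hc : 0 < c)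
    (hwa : w ≠ 0 → a ≠ 0) : w * log a - w * log w ≤ w * log c + a / c - w := by
  rcases hw.eq_or_lt with rfl | hw
  · simpa using div_nonneg ha hc.le
  have ha : 0 < a := ha.lt_of_ne' (hwa hw.ne')
  have hlog := log_le_sub_one_of_pos (show 0 < a / (w * c) by positivity)
  rw [log_div ha.ne' (by positivity), log_mul hw.ne' hc.ne'] at hlog
  have hmul : w * (a / (w * c) - 1) = a / c - w := by field_simp
  nlinarith [mul_le_mul_of_nonneg_left hlog hw.le]

theorem sum_mul_log_sub_sum_mul_log_le (s : Finset ι) {w a : ι → ℝ} (hw : ∀ i ∈ s, 0 ≤ w i)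
    (ha : ∀ i ∈ s, 0 ≤ a i) (hwa : ∀ i ∈ s, w i ≠ 0 → a i ≠ 0) :
    ∑ i ∈ s, w i * log (a i) - ∑ i ∈ s, w i * log (w i) ≤
      (∑ i ∈ s, w i) * log (∑ i ∈ s, a i) - (∑ i ∈ s, w i) * log (∑ i ∈ s, w i) := by
  rcases (sum_nonneg hw).eq_or_lt with hW | hW
  · have hw0 : ∀ i ∈ s, w i = 0 := (sum_eq_zero_iff_of_nonneg hw).1 hW.symm
    have hterm : ∀ b : ι → ℝ, ∑ i ∈ s, w i * b i = 0 :=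
      fun b => sum_eq_zero fun i hi => by simp [hw0 i hi]
    simp only [hterm, ← hW]
    simp
  set W := ∑ i ∈ s, w i
  set A := ∑ i ∈ s, a i
  obtain ⟨i, hi, hwi⟩ := exists_ne_zero_of_sum_ne_zero hW.ne'
  have hA : 0 < A :=
    sum_pos' ha ⟨i, hi, (ha i hi).lt_of_ne' (hwa i hi hwi)⟩
  calc ∑ i ∈ s, w i * log (a i) - ∑ i ∈ s, w i * log (w i)
      = ∑ i ∈ s, (w i * log (a i) - w i * log (w i)) := (sum_sub_distrib _ _).symm
    _ ≤ ∑ i ∈ s, (w i * log (A / W) + a i / (A / W) - w i) :=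
        sum_le_sum fun i hi =>
          mul_log_sub_mul_log_le (hw i hi) (ha i hi) (by positivity) (hwa i hi)
    _ = W * log (A / W) + A / (A / W) - W := by
        rw [sum_sub_distrib, sum_add_distrib, ← sum_mul, ← sum_div]
    _ = W * log A - W * log W := by
        rw [log_div hA.ne' hW.ne', div_div_cancel₀ hA.ne']; ring

theorem neg_sum_mul_log_le (s : Finset ι) {w : ι → ℝ} (hw : ∀ i ∈ s, 0 ≤ w i) :
    -∑ i ∈ s, w i * log (w i) ≤
      (∑ i ∈ s, w i) * log #s - (∑ i ∈ s, w i) * log (∑ i ∈ s, w i) := by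
  simpa using sum_mul_log_sub_sum_mul_log_le s hw (a := 1) (fun _ _ => zero_le_one)
    (fun _ _ _ => one_ne_zero)

end LogSum

section Fibers

variable {α κ : Type*} [Fintype κ] [DecidableEq κ] (D : Finset α) (τ : α → κ)

theorem sum_mul_log_eq_sum_fiberwise (p : α → ℝ) :
    ∑ d ∈ D, p d * log (p d) = ∑ j, ∑ d ∈ D with τ d = j, p d * log (p d) :=
  (sum_fiberwise D τ _).symm

theorem weighted_entropy_le_log_sum_rpow_card {β : ℝ} (hβ : 0 ≤ β) {p : α → ℝ}
    (hp0 : ∀ d ∈ D, 0 ≤ p d) (hp1 : ∑ d ∈ D, p d = 1) :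
    β * (-∑ d ∈ D, p d * log (p d)) +
        (1 - β) * (-∑ j, (∑ d ∈ D with τ d = j, p d) * log (∑ d ∈ D with τ d = j, p d)) ≤
      log (∑ j, (#{d ∈ D | τ d = j} : ℝ) ^ β) := by
  set q : κ → ℝ := fun j => ∑ d ∈ D with τ d = j, p d
  set t : κ → ℝ := fun j => #{d ∈ D | τ d = j}
  have hq0 : ∀ j, 0 ≤ q j := fun j => sum_nonneg fun d hd => hp0 d (mem_filter.1 hd).1
  have hq1 : ∑ j, q j = 1 := (sum_fiberwise D τ p).trans hp1
  have ht : ∀ j, q j ≠ 0 → 0 < t j := fun j hj => by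
    obtain ⟨d, hd, -⟩ := exists_ne_zero_of_sum_ne_zero hj
    exact Nat.cast_pos.2 (card_pos.2 ⟨d, hd⟩)
  have hrow : ∀ j, -∑ d ∈ D with τ d = j, p d * log (p d) ≤
      q j * log (t j) - q j * log (q j) := fun j =>
    neg_sum_mul_log_le _ fun d hd => hp0 d (mem_filter.1 hd).1
  calc β * (-∑ d ∈ D, p d * log (p d)) + (1 - β) * (-∑ j, q j * log (q j))
      = ∑ j, (β * (-∑ d ∈ D with τ d = j, p d * log (p d)) + (1 - β) * -(q j * log (q j))) := by
        rw [sum_mul_log_eq_sum_fiberwise D τ, sum_add_distrib, ← sum_neg_distrib,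
          ← sum_neg_distrib, mul_sum, mul_sum]
    _ ≤ ∑ j, (β * (q j * log (t j) - q j * log (q j)) + (1 - β) * -(q j * log (q j))) := by
        gcongr with j; exact hrow j
    _ = ∑ j, q j * log (t j ^ β) - ∑ j, q j * log (q j) := by
        rw [← sum_sub_distrib]
        refine sum_congr rfl fun j _ => ?_
        rcases eq_or_ne (q j) 0 with hj | hj
        · simp [hj]
        · rw [log_rpow (ht j hj)]; ring
    _ ≤ (∑ j, q j) * log (∑ j, t j ^ β) - (∑ j, q j) * log (∑ j, q j) :=
        sum_mul_log_sub_sum_mul_log_le _ (fun j _ => hq0 j)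
          (fun j _ => by positivity) fun j _ hj => (rpow_pos_of_pos (ht j hj) β).ne'
    _ = log (∑ j, t j ^ β) := by simp [hq1]

theorem weighted_entropy_eq_log_sum_rpow_card {β : ℝ} (hβ : β ≠ 0) {p : α → ℝ}
    (hp : ∀ d ∈ D, p d = (#{e ∈ D | τ e = τ d} : ℝ) ^ (β - 1) /
      ∑ j, (#{e ∈ D | τ e = j} : ℝ) ^ β) :
    β * (-∑ d ∈ D, p d * log (p d)) +
        (1 - β) * (-∑ j, (∑ d ∈ D with τ d = j, p d) * log (∑ d ∈ D with τ d = j, p d)) =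
      log (∑ j, (#{d ∈ D | τ d = j} : ℝ) ^ β) := by
  set t : κ → ℝ := fun j => #{d ∈ D | τ d = j}
  -- `S = 0` only for `D = ∅`, where `x / 0 = 0` and `log 0 = 0` make both sides vanish.
  set S := ∑ j, t j ^ β
  have hfiber : ∀ j, ∀ d ∈ {d ∈ D | τ d = j}, p d = t j ^ (β - 1) / S := by
    intro j d hd
    rw [mem_filter] at hd
    rw [hp d hd.1, hd.2]
  have htt : ∀ j, t j * t j ^ (β - 1) = t j ^ β := fun j => by
    rw [← rpow_one_add' (by positivity) (by simpa using hβ), add_sub_cancel]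
  have hq : ∀ j, ∑ d ∈ D with τ d = j, p d = t j ^ β / S := fun j => by
    rw [sum_congr rfl (hfiber j), sum_const, nsmul_eq_mul, ← htt, mul_div_assoc]
  have hrow : ∀ j, ∑ d ∈ D with τ d = j, p d * log (p d) =
      t j ^ β / S * log (t j ^ (β - 1) / S) := fun j => by
    rw [sum_congr rfl fun d hd => by rw [hfiber j d hd], sum_const, nsmul_eq_mul, ← htt]
    ring
  have hterm : ∀ j, β * -(t j ^ β / S * log (t j ^ (β - 1) / S)) +
      (1 - β) * -(t j ^ β / S * log (t j ^ β / S)) = t j ^ β / S * log S := fun j => by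
    rcases eq_or_ne (t j) 0 with ht | ht
    · simp [ht, zero_rpow hβ]
    rcases eq_or_ne S 0 with hS | hS
    · simp [hS]
    have ht : 0 < t j := lt_of_le_of_ne (by positivity) ht.symm
    rw [log_div (by positivity) hS, log_div (by positivity) hS, log_rpow ht, log_rpow ht]
    ring
  calc β * (-∑ d ∈ D, p d * log (p d)) +
        (1 - β) * (-∑ j, (∑ d ∈ D with τ d = j, p d) * log (∑ d ∈ D with τ d = j, p d))
      = ∑ j, (β * -(t j ^ β / S * log (t j ^ (β - 1) / S)) +
          (1 - β) * -(t j ^ β / S * log (t j ^ β / S))) := by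
        simp only [sum_mul_log_eq_sum_fiberwise D τ, hrow, hq, sum_add_distrib,
          ← sum_neg_distrib, mul_sum]
    _ = (∑ j, t j ^ β) / S * log S := by rw [sum_congr rfl fun j _ => hterm j, sum_div, sum_mul]
    _ = log S := by
        rcases eq_or_ne S 0 with hS | hS
        · simp [hS]
        · rw [div_self hS, one_mul]

end Fibers

theorem stmt19_general (n m : ℕ) (hm : 1 < m) (hmn : m < n)
    (D : Finset (Fin n × Fin m))
    (t : Fin m → ℕ) (ht : ∀ j, t j = (D.filter (fun d => d.2 = j)).card)
    (β : ℝ) (hβ : β = Real.log m / Real.log n)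
    (S : ℝ) (hS : S = ∑ j ∈ univ.filter (fun j => 1 ≤ t j), (t j : ℝ) ^ β)
    (dimOf : (Fin n × Fin m → ℝ) → ℝ)
    (hdim : ∀ p, dimOf p =
      (-∑ j, (∑ d ∈ D.filter (fun d => d.2 = j), p d)
          * Real.log (∑ d ∈ D.filter (fun d => d.2 = j), p d)) / Real.log m
      + ((-∑ d ∈ D, p d * Real.log (p d))
          - (-∑ j, (∑ d ∈ D.filter (fun d => d.2 = j), p d)
              * Real.log (∑ d ∈ D.filter (fun d => d.2 = j), p d))) / Real.log n) :
    (∀ p : Fin n × Fin m → ℝ,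
        (∀ d, 0 ≤ p d) → (∀ d, d ∉ D → p d = 0) → (∑ d ∈ D, p d = 1) →
        dimOf p ≤ Real.log S / Real.log m) ∧
    dimOf (fun d => if d ∈ D then (t d.2 : ℝ) ^ (β - 1) / S else 0)
      = Real.log S / Real.log m := by
  have hlogm : 0 < log m := log_pos (by exact_mod_cast hm)
  have hlogn : 0 < log n := log_pos (by exact_mod_cast hm.trans hmn)
  have hβ0 : 0 < β := hβ ▸ div_pos hlogm hlogn
  have hcombine : ∀ A B : ℝ, A / log m + (B - A) / log n = (β * B + (1 - β) * A) / log m := by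
    intro A B
    rw [hβ]
    field_simp
    ring
  obtain rfl : t = fun j => #{d ∈ D | d.2 = j} := funext ht
  obtain rfl : S = ∑ j, (#{d ∈ D | d.2 = j} : ℝ) ^ β := hS.trans <| sum_filter_of_ne fun j _ h =>
    Nat.one_le_iff_ne_zero.2 fun h0 => h (by simp [h0, zero_rpow hβ0.ne'])
  refine ⟨fun p hp0 _ hp1 => ?_, ?_⟩
  · rw [hdim, hcombine, div_le_div_iff_of_pos_right hlogm]
    exact weighted_entropy_le_log_sum_rpow_card D Prod.snd hβ0.le (fun d _ => hp0 d) hp1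
  · rw [hdim, hcombine]
    exact congrArg (· / log m)
      (weighted_entropy_eq_log_sum_rpow_card D Prod.snd hβ0.ne' fun d hd => if_pos hd)

/-- For any probability vector `p` on the digit set `D`, with `1 < m < n`,
`β = log m / log n`, `q = τ_*p` the row marginal and `t_j` the row counts,
`d(p) = H(q)/log m + (H(p) − H(q))/log n ≤ log (∑_{j : t_j ≥ 1} t_j^β)/log m`,
with equality for `p_{i,j} = t_j^{β−1} / ∑_k t_k^β`. -/
theorem stmt19 (n m : ℕ) (hm : 1 < m) (hmn : m < n)
    (D : Finset (Fin n × Fin m)) (hD : D.Nonempty)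
    (t : Fin m → ℕ) (ht : ∀ j, t j = (D.filter (fun d => d.2 = j)).card)
    (β : ℝ) (hβ : β = Real.log m / Real.log n)
    (S : ℝ) (hS : S = ∑ j ∈ univ.filter (fun j => 1 ≤ t j), (t j : ℝ) ^ β)
    (dimOf : (Fin n × Fin m → ℝ) → ℝ)
    (hdim : ∀ p, dimOf p =
      (-∑ j, (∑ d ∈ D.filter (fun d => d.2 = j), p d)
          * Real.log (∑ d ∈ D.filter (fun d => d.2 = j), p d)) / Real.log m
      + ((-∑ d ∈ D, p d * Real.log (p d))
          - (-∑ j, (∑ d ∈ D.filter (fun d => d.2 = j), p d)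
              * Real.log (∑ d ∈ D.filter (fun d => d.2 = j), p d))) / Real.log n) :
    (∀ p : Fin n × Fin m → ℝ,
        (∀ d, 0 ≤ p d) → (∀ d, d ∉ D → p d = 0) → (∑ d ∈ D, p d = 1) →
        dimOf p ≤ Real.log S / Real.log m) ∧
    dimOf (fun d => if d ∈ D then (t d.2 : ℝ) ^ (β - 1) / S else 0)
      = Real.log S / Real.log m :=
  stmt19_general n m hm hmn D t ht β hβ S hS dimOf hdim
end
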